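/- Let X be standard normal with density φ. For f(u) = φ(u) - u·P(X>u), there is a constant C such that for all u ≥ 1 and v ≥ 0, |f(u) - f(u+v) - (φ(u)/u²)(1 - e^{-v²/2 - uv}/(1 + v/u)²)| ≤ C·min(v/u³, 1/u⁴)·φ(u). -/

import Mathlib

open MeasureTheory Filter
open scoped Topology

/-- Standard normal density. -/
noncomputable def gaussPDF (u : ℝ) : ℝ := (Real.sqrt (2 * Real.pi))⁻¹ * Real.exp (-u ^ 2 / 2)

/-- Standard normal upper tail `P(X > u)`. -/
noncomputable def gaussTail (u : ℝ) : ℝ := ∫ s in Set.Ioi u, gaussPDF s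

/-- `f(u) = φ(u) - u P(X>u)`. -/
noncomputable def gaussF (u : ℝ) : ℝ := gaussPDF u - u * gaussTail u

/-!
Since `f' = -Q` with `Q(t) = P(X > t)`, `f(u) - f(u+v) = ∫_u^{u+v} Q`, while the main term is
`∫_u^{u+v} (φ(t)/t + 2φ(t)/t³)`, an antiderivative of the integrand being `-φ(t)/t²`. The identity
`Q(t) + ∫_t^∞ φ(s)/s² ds = φ(t)/t` gives the Mills ratio bounds `φ(t)/t - φ(t)/t³ ≤ Q(t) ≤ φ(t)/t`,
so the integrands differ by at most `3φ(t)/u³` on `[u, u+v]`; finally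
`∫_u^{u+v} φ ≤ φ(u) min(v, 1/u)`.
-/

open Set

lemma gaussPDF_pos (u : ℝ) : 0 < gaussPDF u := by
  unfold gaussPDF; positivity

lemma continuous_gaussPDF : Continuous gaussPDF := by
  unfold gaussPDF; fun_prop

lemma integrable_gaussPDF : Integrable gaussPDF := by
  have h := (integrable_exp_neg_mul_sq (b := 1 / 2) (by norm_num)).const_mul
    (Real.sqrt (2 * Real.pi))⁻¹
  refine h.congr (ae_of_all _ fun x => ?_)
  simp only [gaussPDF]; ring_nf

lemma hasDerivAt_gaussPDF (u : ℝ) : HasDerivAt gaussPDF (-u * gaussPDF u) u := by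
  have h : HasDerivAt (fun x : ℝ => -x ^ 2 / 2) (-u) u :=
    ((hasDerivAt_pow 2 u).neg.div_const 2).congr_deriv (by push_cast; ring)
  exact (h.exp.const_mul _).congr_deriv (by simp only [gaussPDF]; ring)

lemma tendsto_gaussPDF_atTop : Tendsto gaussPDF atTop (𝓝 0) := by
  have h : Tendsto (fun u : ℝ => -u ^ 2 / 2) atTop atBot :=
    (tendsto_neg_atBot_iff.mpr (tendsto_pow_atTop two_ne_zero)).atBot_div_const two_pos
  have := (Real.tendsto_exp_atBot.comp h).const_mul (Real.sqrt (2 * Real.pi))⁻¹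
  rw [mul_zero] at this
  exact this

lemma antitoneOn_gaussPDF : AntitoneOn gaussPDF (Ici 0) := by
  intro a ha b _ hab
  unfold gaussPDF
  gcongr

lemma gaussPDF_add (u v : ℝ) : gaussPDF (u + v) = gaussPDF u * Real.exp (-v ^ 2 / 2 - u * v) := by
  simp only [gaussPDF, mul_assoc, ← Real.exp_add]
  congr 2; ring

lemma hasDerivAt_neg_gaussPDF_div {s : ℝ} (hs : s ≠ 0) :
    HasDerivAt (fun x => -(gaussPDF x / x)) (gaussPDF s + gaussPDF s / s ^ 2) s := by
  refine ((hasDerivAt_gaussPDF s).div (hasDerivAt_id s) hs).neg.congr_deriv ?_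
  simp only [id]
  field_simp
  ring

lemma tendsto_neg_gaussPDF_div_atTop : Tendsto (fun x => -(gaussPDF x / x)) atTop (𝓝 0) := by
  simpa [div_eq_mul_inv] using (tendsto_gaussPDF_atTop.mul tendsto_inv_atTop_zero).neg

lemma integrableOn_gaussPDF_div_sq {t : ℝ} (ht : 0 < t) :
    IntegrableOn (fun s => gaussPDF s / s ^ 2) (Ioi t) := by
  have h := integrableOn_Ioi_deriv_of_nonneg'
    (fun x hx => hasDerivAt_neg_gaussPDF_div (ht.trans_le hx).ne')
    (fun s _ => by have := gaussPDF_pos s; positivity) tendsto_neg_gaussPDF_div_atTop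
  exact (h.sub integrable_gaussPDF.integrableOn).congr_fun (fun s _ => by simp) measurableSet_Ioi

lemma gaussTail_add_integral_gaussPDF_div_sq {t : ℝ} (ht : 0 < t) :
    gaussTail t + ∫ s in Ioi t, gaussPDF s / s ^ 2 = gaussPDF t / t := by
  have h := integral_Ioi_of_hasDerivAt_of_nonneg'
    (fun x hx => hasDerivAt_neg_gaussPDF_div (ht.trans_le hx).ne')
    (fun s _ => by have := gaussPDF_pos s; positivity) tendsto_neg_gaussPDF_div_atTop
  rw [gaussTail, ← integral_add integrable_gaussPDF.integrableOn
    (integrableOn_gaussPDF_div_sq ht), h]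
  ring

lemma gaussTail_le_gaussPDF_div {t : ℝ} (ht : 0 < t) : gaussTail t ≤ gaussPDF t / t := by
  have : 0 ≤ ∫ s in Ioi t, gaussPDF s / s ^ 2 :=
    setIntegral_nonneg measurableSet_Ioi fun s _ => by have := gaussPDF_pos s; positivity
  linarith [gaussTail_add_integral_gaussPDF_div_sq ht]

lemma gaussPDF_div_sub_le_gaussTail {t : ℝ} (ht : 0 < t) :
    gaussPDF t / t - gaussPDF t / t ^ 3 ≤ gaussTail t := by
  have h : ∫ s in Ioi t, gaussPDF s / s ^ 2 ≤ gaussTail t / t ^ 2 := by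
    rw [gaussTail, ← integral_div]
    refine setIntegral_mono_on (integrableOn_gaussPDF_div_sq ht)
      (integrable_gaussPDF.div_const _).integrableOn measurableSet_Ioi fun s hs => ?_
    have := gaussPDF_pos s
    gcongr
    exact (mem_Ioi.mp hs).le
  have h' : gaussTail t / t ^ 2 ≤ gaussPDF t / t ^ 3 := by
    calc gaussTail t / t ^ 2 ≤ gaussPDF t / t / t ^ 2 := by
          gcongr; exact gaussTail_le_gaussPDF_div ht
      _ = gaussPDF t / t ^ 3 := by ring
  linarith [gaussTail_add_integral_gaussPDF_div_sq ht]

lemma gaussTail_sub_gaussTail (a b : ℝ) : gaussTail a - gaussTail b = ∫ s in a..b, gaussPDF s :=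
  intervalIntegral.integral_Ioi_sub_Ioi' integrable_gaussPDF.integrableOn
    integrable_gaussPDF.integrableOn

lemma gaussTail_nonneg (t : ℝ) : 0 ≤ gaussTail t :=
  setIntegral_nonneg measurableSet_Ioi fun s _ => (gaussPDF_pos s).le

lemma hasDerivAt_gaussTail (u : ℝ) : HasDerivAt gaussTail (-gaussPDF u) u := by
  have h : gaussTail = fun x => gaussTail 0 - ∫ s in 0..x, gaussPDF s :=
    funext fun x => by linarith [gaussTail_sub_gaussTail 0 x]
  rw [h]
  simpa using (continuous_gaussPDF.integral_hasStrictDerivAt 0 u).hasDerivAt.const_sub _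

lemma continuous_gaussTail : Continuous gaussTail :=
  continuous_iff_continuousAt.2 fun u => (hasDerivAt_gaussTail u).continuousAt

lemma hasDerivAt_gaussF (u : ℝ) : HasDerivAt gaussF (-gaussTail u) u := by
  refine ((hasDerivAt_gaussPDF u).sub
    ((hasDerivAt_id u).mul (hasDerivAt_gaussTail u))).congr_deriv ?_
  simp only [id]
  ring

lemma gaussF_sub_gaussF (a b : ℝ) : gaussF a - gaussF b = ∫ t in a..b, gaussTail t := by
  have h := intervalIntegral.integral_eq_sub_of_hasDerivAt (fun t _ => hasDerivAt_gaussF t)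
    (continuous_gaussTail.neg.intervalIntegrable a b)
  rw [intervalIntegral.integral_neg] at h
  linarith

lemma hasDerivAt_neg_gaussPDF_div_sq {t : ℝ} (ht : t ≠ 0) :
    HasDerivAt (fun x => -(gaussPDF x / x ^ 2)) (gaussPDF t / t + 2 * gaussPDF t / t ^ 3) t := by
  refine ((hasDerivAt_gaussPDF t).div (hasDerivAt_pow 2 t) (pow_ne_zero 2 ht)).neg.congr_deriv ?_
  field_simp
  ring

lemma continuousOn_gaussPDF_div_add :
    ContinuousOn (fun t => gaussPDF t / t + 2 * gaussPDF t / t ^ 3) (Ioi 0) := by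
  have := continuous_gaussPDF
  fun_prop (disch := intro t (ht : 0 < t); positivity)

lemma intervalIntegrable_gaussPDF_div_add {a b : ℝ} (ha : 0 < a) (hab : a ≤ b) :
    IntervalIntegrable (fun t => gaussPDF t / t + 2 * gaussPDF t / t ^ 3) volume a b :=
  (continuousOn_gaussPDF_div_add.mono fun _ ht => ha.trans_le ht.1).intervalIntegrable_of_Icc hab

lemma integral_gaussPDF_div_add {a b : ℝ} (ha : 0 < a) (hab : a ≤ b) :
    ∫ t in a..b, (gaussPDF t / t + 2 * gaussPDF t / t ^ 3)
      = gaussPDF a / a ^ 2 - gaussPDF b / b ^ 2 := by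
  have hderiv (t : ℝ) (ht : t ∈ uIcc a b) :
      HasDerivAt (fun x => -(gaussPDF x / x ^ 2)) (gaussPDF t / t + 2 * gaussPDF t / t ^ 3) t := by
    rw [uIcc_of_le hab] at ht
    exact hasDerivAt_neg_gaussPDF_div_sq (ha.trans_le ht.1).ne'
  rw [intervalIntegral.integral_eq_sub_of_hasDerivAt hderiv
    (intervalIntegrable_gaussPDF_div_add ha hab)]
  ring

lemma abs_gaussTail_sub_le {t : ℝ} (ht : 0 < t) :
    |gaussTail t - (gaussPDF t / t + 2 * gaussPDF t / t ^ 3)| ≤ 3 * (gaussPDF t / t ^ 3) := by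
  have := gaussPDF_pos t
  have : 0 ≤ gaussPDF t / t ^ 3 := by positivity
  rw [abs_le, mul_div_assoc]
  constructor
  · linarith [gaussPDF_div_sub_le_gaussTail ht]
  · linarith [gaussTail_le_gaussPDF_div ht]

lemma abs_gaussF_sub_sub_le {a b : ℝ} (ha : 0 < a) (hab : a ≤ b) :
    |gaussF a - gaussF b - (gaussPDF a / a ^ 2 - gaussPDF b / b ^ 2)|
      ≤ 3 / a ^ 3 * ∫ t in a..b, gaussPDF t := by
  have hTail := continuous_gaussTail.intervalIntegrable (μ := volume) a b
  have hMain := intervalIntegrable_gaussPDF_div_add ha hab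
  rw [gaussF_sub_gaussF, ← integral_gaussPDF_div_add ha hab,
    ← intervalIntegral.integral_sub hTail hMain, ← intervalIntegral.integral_const_mul]
  refine intervalIntegral.abs_integral_le_integral_abs hab |>.trans <|
    intervalIntegral.integral_mono_on hab ?_ ?_ fun t ht => ?_
  · exact (hTail.sub hMain).abs
  · exact (continuous_gaussPDF.const_mul _).intervalIntegrable a b
  · have ht0 : 0 < t := ha.trans_le ht.1
    calc _ ≤ 3 * (gaussPDF t / t ^ 3) := abs_gaussTail_sub_le ht0
      _ ≤ 3 * (gaussPDF t / a ^ 3) := by have := gaussPDF_pos t; gcongr; exact ht.1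
      _ = 3 / a ^ 3 * gaussPDF t := by ring

lemma integral_gaussPDF_le {a b : ℝ} (ha : 0 < a) (hab : a ≤ b) :
    ∫ t in a..b, gaussPDF t ≤ gaussPDF a * min (b - a) (1 / a) := by
  rw [mul_min_of_nonneg _ _ (gaussPDF_pos a).le]
  refine le_min ?_ ?_
  · calc ∫ t in a..b, gaussPDF t ≤ ∫ _ in a..b, gaussPDF a :=
          intervalIntegral.integral_mono_on hab (continuous_gaussPDF.intervalIntegrable a b)
            intervalIntegrable_const fun t ht => antitoneOn_gaussPDF ha.le (ha.le.trans ht.1) ht.1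
      _ = gaussPDF a * (b - a) := by simp [mul_comm]
  · rw [mul_one_div]
    linarith [gaussTail_sub_gaussTail a b, gaussTail_nonneg b, gaussTail_le_gaussPDF_div ha]

lemma gaussPDF_div_sq_sub_gaussPDF_add_div_sq {u v : ℝ} (hu : u ≠ 0) (huv : u + v ≠ 0) :
    gaussPDF u / u ^ 2 - gaussPDF (u + v) / (u + v) ^ 2
      = gaussPDF u / u ^ 2 * (1 - Real.exp (-v ^ 2 / 2 - u * v) / (1 + v / u) ^ 2) := by
  rw [gaussPDF_add, one_add_div hu]
  field_simp

/-- There is a constant `C` such that for all `u ≥ 1`, `v ≥ 0`,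
`|f(u) - f(u+v) - (φ(u)/u²)(1 - e^{-v²/2-uv}/(1+v/u)²)| ≤ C min(v/u³, 1/u⁴) φ(u)`. -/
theorem stmt1 :
    ∃ C : ℝ, ∀ u v : ℝ, 1 ≤ u → 0 ≤ v →
      |gaussF u - gaussF (u + v)
          - gaussPDF u / u ^ 2 * (1 - Real.exp (-v ^ 2 / 2 - u * v) / (1 + v / u) ^ 2)|
        ≤ C * min (v / u ^ 3) (1 / u ^ 4) * gaussPDF u := by
  refine ⟨3, fun u v hu hv => ?_⟩
  have hu0 : 0 < u := one_pos.trans_le hu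
  have huv : u ≤ u + v := le_add_of_nonneg_right hv
  rw [← gaussPDF_div_sq_sub_gaussPDF_add_div_sq hu0.ne' (hu0.trans_le huv).ne']
  calc _ ≤ 3 / u ^ 3 * ∫ t in u..u + v, gaussPDF t := abs_gaussF_sub_sub_le hu0 huv
    _ ≤ 3 / u ^ 3 * (gaussPDF u * min v (1 / u)) := by
      gcongr
      simpa using integral_gaussPDF_le hu0 huv
    _ = 3 * min (v / u ^ 3) (1 / u / u ^ 3) * gaussPDF u := by
      rw [min_div_div_right (by positivity)]
      ring
    _ = 3 * min (v / u ^ 3) (1 / u ^ 4) * gaussPDF u := by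
      rw [div_div, ← pow_succ']
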